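/- arXiv:2101.06843 — 2 statements merged into one kernel-verified Lean document; each statement's English description precedes it below -/
import Mathlib

section
/- Per-user mutual information is nonincreasing in the number of users of the binary OR multiple access channel: for any p ∈ (0,1) and any integers 1 ≤ t ≤ k, if I_m denotes the mutual information I(X_1,…,X_m ; Y_m) of the m-user binary OR multiple access channel at parameter p (with the same channel W for every m), then I_t / t ≥ I_k / k. -/
/-!
The output `Y_m` depends on the inputs only through `Z = OR(X) ∼ Bernoulli(q_m)`, with
`q_m = 1 - (1 - p)^m`, so `I_m = G(q_m)` where `G(q) = I(Z;Y)` for `Z ∼ Bernoulli(q)`.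
As the entropy of a mixture minus a linear term, `G` is concave on `[0,1]`, and it vanishes at
`0` and `1`; hence `G(q)/q` is nonincreasing and nonnegative. Likewise `x ↦ 1 - (1 - p)^x` is
concave and vanishes at `0`, so `q_m/m` is nonincreasing. Therefore
`I_k/k = (G(q_k)/q_k)(q_k/k) ≤ (G(q_t)/q_t)(q_t/t) = I_t/t`.
-/

open Finset
open scoped Classical

noncomputable section

/-- The Bernoulli probability mass function on `Bool` with parameter `p`. -/
def bern (p : ℝ) (b : Bool) : ℝ := if b then p else 1 - p

/-- The binary OR of a finite family of bits. -/
def orB {t : ℕ} (x : Fin t → Bool) : Bool := decide (∃ i, x i = true)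

/-- Mutual information (natural logarithm) of a joint pmf on a product of two finite sets. -/
def MI {A B : Type} [Fintype A] [Fintype B] (μ : A → B → ℝ) : ℝ :=
  ∑ a : A, ∑ b : B,
    μ a b * Real.log (μ a b / ((∑ b' : B, μ a b') * (∑ a' : A, μ a' b)))

/-- Joint pmf of `((X_1,…,X_m), Y_m)` for the `m`-user binary OR multiple access channel at
parameter `p` with channel `W`: the `X_i` are i.i.d. Bernoulli(`p`), `Z` is their binary OR,
and `Y_m ∼ W(·|Z)`. -/
def macJoint {Y : Type} [Fintype Y] (W : Y → Bool → ℝ) (p : ℝ) (m : ℕ)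
    (x : Fin m → Bool) (y : Y) : ℝ :=
  (∏ i, bern p (x i)) * W y (orB x)

open Real

theorem ConcaveOn.antitoneOn_div {s : Set ℝ} {f : ℝ → ℝ} (hf : ConcaveOn ℝ s f) (h0 : 0 ∈ s)
    (hf0 : f 0 = 0) : AntitoneOn (fun x => f x / x) (s ∩ Set.Ioi 0) := by
  rintro x ⟨hxs, hx0⟩ y ⟨hys, hy0⟩ hxy
  have := hf.neg.secant_mono h0 hxs hys (ne_of_gt hx0) (ne_of_gt hy0) hxy
  simpa [hf0, neg_div] using this

theorem one_sub_pow_div_le_one_sub_pow_div {a : ℝ} (ha : 0 < a) {t k : ℕ} (ht : 0 < t)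
    (htk : t ≤ k) : (1 - a ^ k) / k ≤ (1 - a ^ t) / t := by
  have hconc : ConcaveOn ℝ Set.univ fun x : ℝ => 1 - a ^ x :=
    ((convexOn_rpow_left ha).neg.add_const 1).congr fun x _ => by simp [sub_eq_neg_add]
  have ht' : (0 : ℝ) < t := by exact_mod_cast ht
  have htk' : (t : ℝ) ≤ k := by exact_mod_cast htk
  have := hconc.antitoneOn_div (Set.mem_univ 0) (by simp) ⟨Set.mem_univ _, ht'⟩
    ⟨Set.mem_univ _, ht'.trans_le htk'⟩ htk'
  simpa only [rpow_natCast] using this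

theorem concaveOn_finset_sum {ι : Type*} (u : Finset ι) {s : Set ℝ} (hs : Convex ℝ s)
    {f : ι → ℝ → ℝ} (hf : ∀ i ∈ u, ConcaveOn ℝ s (f i)) :
    ConcaveOn ℝ s fun x => ∑ i ∈ u, f i x := by
  induction u using Finset.induction_on with
  | empty => simpa using concaveOn_const 0 hs
  | insert i u hi ih =>
    simp only [sum_insert hi]
    exact (hf i (mem_insert_self i u)).add (ih fun j hj => hf j (mem_insert_of_mem hj))

theorem concaveOn_negMulLog_lineMap_sub {a b : ℝ} (ha : 0 ≤ a) (hb : 0 ≤ b) :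
    ConcaveOn ℝ (Set.Icc 0 1) fun q =>
      negMulLog ((1 - q) * a + q * b) - ((1 - q) * negMulLog a + q * negMulLog b) := by
  have hmix : ConcaveOn ℝ (Set.Icc 0 1) (negMulLog ∘ (AffineMap.lineMap a b : ℝ →ᵃ[ℝ] ℝ)) := by
    refine (concaveOn_negMulLog.comp_affineMap _).subset ?_ (convex_Icc 0 1)
    rintro q ⟨hq0, hq1⟩
    simp only [Set.mem_preimage, AffineMap.lineMap_apply_module, smul_eq_mul, Set.mem_Ici]
    nlinarith
  have hchord : ConvexOn ℝ (Set.Icc 0 1)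
      (AffineMap.lineMap (negMulLog a) (negMulLog b) : ℝ →ᵃ[ℝ] ℝ) :=
    ((convexOn_id convex_univ).comp_affineMap _).subset (Set.subset_univ _) (convex_Icc 0 1)
  exact (hmix.sub hchord).congr fun q _ => by simp [AffineMap.lineMap_apply_module]

theorem mul_mul_log_div_of_mul_le {c w M : ℝ} (hc : 0 ≤ c) (hw : 0 ≤ w) (hM : c * w ≤ M) :
    c * (w * log (w / M)) = c * w * (log w - log M) := by
  rcases (mul_nonneg hc hw).eq_or_lt with h | h
  · rw [← mul_assoc, ← h, zero_mul, zero_mul]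
  · have hw' : 0 < w := pos_of_mul_pos_right h hc
    rw [log_div hw'.ne' (h.trans_le hM).ne']
    ring

theorem MI_mul_of_sum_eq_one {A B : Type} [Fintype A] [Fintype B] (P : A → ℝ) (K : A → B → ℝ)
    (hK : ∀ a, ∑ b, K a b = 1) :
    MI (fun a b => P a * K a b) = ∑ a, P a * ∑ b, K a b * log (K a b / ∑ a', P a' * K a' b) := by
  have hrow : ∀ a, ∑ b, P a * K a b = P a := fun a => by rw [← mul_sum, hK, mul_one]
  unfold MI
  refine sum_congr rfl fun a _ => ?_
  rw [hrow, mul_sum]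
  refine sum_congr rfl fun b _ => ?_
  rcases eq_or_ne (P a) 0 with h | h
  · simp [h]
  · rw [mul_div_mul_left _ _ h, mul_assoc]

theorem orB_eq_false_iff {m : ℕ} {x : Fin m → Bool} : orB x = false ↔ x = fun _ => false := by
  simp [orB, funext_iff]

theorem sum_prod_bern_mul_orB (p : ℝ) (m : ℕ) (g : Bool → ℝ) :
    ∑ x : Fin m → Bool, (∏ i, bern p (x i)) * g (orB x)
      = (1 - p) ^ m * g false + (1 - (1 - p) ^ m) * g true := by
  have htotal : ∑ x : Fin m → Bool, ∏ i, bern p (x i) = 1 := by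
    rw [← Fintype.prod_sum]
    simp [bern]
  have hcorrection : ∑ x : Fin m → Bool, (∏ i, bern p (x i)) * (g (orB x) - g true)
      = (1 - p) ^ m * (g false - g true) := by
    rw [sum_eq_single (fun _ => false)]
    · simp [bern, orB]
    · intro x _ hx
      rw [Bool.eq_true_of_not_eq_false (mt orB_eq_false_iff.1 hx), sub_self, mul_zero]
    · simp
  calc ∑ x : Fin m → Bool, (∏ i, bern p (x i)) * g (orB x)
      = (∑ x : Fin m → Bool, ∏ i, bern p (x i)) * g true
          + ∑ x : Fin m → Bool, (∏ i, bern p (x i)) * (g (orB x) - g true) := by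
        rw [sum_mul, ← sum_add_distrib]
        exact sum_congr rfl fun x _ => by ring
    _ = _ := by rw [htotal, hcorrection]; ring

section BinaryInput

variable {Y : Type} [Fintype Y]

def outputDist (W : Y → Bool → ℝ) (q : ℝ) (y : Y) : ℝ := (1 - q) * W y false + q * W y true

/-- `I(Z;Y) = H(Y) - H(Y|Z)` for `Z ∼ Bernoulli(q)` sent through `W`. -/
def bernoulliInputMI (W : Y → Bool → ℝ) (q : ℝ) : ℝ :=
  ∑ y, (negMulLog (outputDist W q y)
    - ((1 - q) * negMulLog (W y false) + q * negMulLog (W y true)))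

theorem bernoulliInputMI_one (W : Y → Bool → ℝ) : bernoulliInputMI W 1 = 0 := by
  simp [bernoulliInputMI, outputDist]

theorem bernoulliInputMI_zero (W : Y → Bool → ℝ) : bernoulliInputMI W 0 = 0 := by
  simp [bernoulliInputMI, outputDist]

theorem concaveOn_bernoulliInputMI {W : Y → Bool → ℝ} (hW0 : ∀ y z, 0 ≤ W y z) :
    ConcaveOn ℝ (Set.Icc 0 1) (bernoulliInputMI W) :=
  concaveOn_finset_sum univ (convex_Icc 0 1) fun y _ =>
    concaveOn_negMulLog_lineMap_sub (hW0 y false) (hW0 y true)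

theorem antitoneOn_bernoulliInputMI_div {W : Y → Bool → ℝ} (hW0 : ∀ y z, 0 ≤ W y z) :
    AntitoneOn (fun q => bernoulliInputMI W q / q) (Set.Ioc 0 1) :=
  ((concaveOn_bernoulliInputMI hW0).antitoneOn_div (by simp) (bernoulliInputMI_zero W)).mono
    fun _ ⟨hq0, hq1⟩ => ⟨⟨hq0.le, hq1⟩, hq0⟩

theorem bernoulliInputMI_nonneg {W : Y → Bool → ℝ} (hW0 : ∀ y z, 0 ≤ W y z) {q : ℝ}
    (hq0 : 0 ≤ q) (hq1 : q ≤ 1) : 0 ≤ bernoulliInputMI W q := by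
  rcases hq0.eq_or_lt with rfl | hq0
  · rw [bernoulliInputMI_zero]
  · have h : bernoulliInputMI W 1 / 1 ≤ bernoulliInputMI W q / q :=
      antitoneOn_bernoulliInputMI_div hW0 ⟨hq0, hq1⟩ ⟨one_pos, le_rfl⟩ hq1
    rw [bernoulliInputMI_one, zero_div, le_div_iff₀ hq0, zero_mul] at h
    exact h

theorem bernoulliInputMI_eq_sum_mul_log_div {W : Y → Bool → ℝ} (hW0 : ∀ y z, 0 ≤ W y z)
    {q : ℝ} (hq0 : 0 ≤ q) (hq1 : q ≤ 1) :
    bernoulliInputMI W q =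
      (1 - q) * ∑ y, W y false * log (W y false / outputDist W q y)
        + q * ∑ y, W y true * log (W y true / outputDist W q y) := by
  rw [mul_sum, mul_sum, ← sum_add_distrib]
  refine sum_congr rfl fun y _ => ?_
  have hfalse := mul_nonneg (sub_nonneg.2 hq1) (hW0 y false)
  have htrue := mul_nonneg hq0 (hW0 y true)
  rw [mul_mul_log_div_of_mul_le (sub_nonneg.2 hq1) (hW0 y false) (by simp [outputDist, htrue]),
    mul_mul_log_div_of_mul_le hq0 (hW0 y true) (by simp [outputDist, hfalse])]
  simp only [negMulLog, outputDist]
  ring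

theorem MI_macJoint {W : Y → Bool → ℝ} (hW0 : ∀ y z, 0 ≤ W y z)
    (hW1 : ∀ z, ∑ y : Y, W y z = 1) {p : ℝ} (hp0 : 0 ≤ p) (hp1 : p ≤ 1) (m : ℕ) :
    MI (macJoint W p m) = bernoulliInputMI W (1 - (1 - p) ^ m) := by
  have hpow0 : 0 ≤ (1 - p) ^ m := pow_nonneg (sub_nonneg.2 hp1) m
  have hpow1 : (1 - p) ^ m ≤ 1 := pow_le_one₀ (sub_nonneg.2 hp1) (by linarith)
  have houtput : ∀ y, ∑ x : Fin m → Bool, (∏ i, bern p (x i)) * W y (orB x)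
      = outputDist W (1 - (1 - p) ^ m) y := fun y => by
    rw [sum_prod_bern_mul_orB, outputDist, sub_sub_cancel]
  rw [bernoulliInputMI_eq_sum_mul_log_div hW0 (by linarith) (by linarith), sub_sub_cancel]
  unfold macJoint
  rw [MI_mul_of_sum_eq_one _ (fun x y => W y (orB x)) fun x => hW1 _]
  simp only [houtput]
  exact sum_prod_bern_mul_orB p m fun z => ∑ y, W y z * log (W y z / outputDist W _ y)

end BinaryInput

/-- per-user mutual information is nonincreasing in the number of users of
the binary OR multiple access channel: for `1 ≤ t ≤ k`, `I_t / t ≥ I_k / k` where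
`I_m = I(X_1,…,X_m ; Y_m)`. -/
theorem statement8 (Y : Type) [Fintype Y] (W : Y → Bool → ℝ)
    (hW0 : ∀ y z, 0 ≤ W y z) (hW1 : ∀ z, ∑ y : Y, W y z = 1)
    (p : ℝ) (hp : p ∈ Set.Ioo (0 : ℝ) 1)
    (t k : ℕ) (ht : 1 ≤ t) (htk : t ≤ k) :
    MI (macJoint W p k) / k ≤ MI (macJoint W p t) / t := by
  obtain ⟨hp0, hp1⟩ := hp
  rw [MI_macJoint hW0 hW1 hp0.le hp1.le, MI_macJoint hW0 hW1 hp0.le hp1.le]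
  set G := bernoulliInputMI W
  set β := 1 - (1 - p) ^ t
  set γ := 1 - (1 - p) ^ k
  have hβ0 : 0 < β := sub_pos.2 (pow_lt_one₀ (by linarith) (by linarith) (by omega))
  have hβγ : β ≤ γ := sub_le_sub_left (pow_le_pow_of_le_one (by linarith) (by linarith) htk) 1
  have hγ1 : γ ≤ 1 := sub_le_self 1 (pow_nonneg (by linarith) k)
  have hγ0 : 0 < γ := hβ0.trans_le hβγ
  have hG : G γ / γ ≤ G β / β :=
    antitoneOn_bernoulliInputMI_div hW0 ⟨hβ0, hβγ.trans hγ1⟩ ⟨hγ0, hγ1⟩ hβγ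
  have hGβ : 0 ≤ G β / β :=
    div_nonneg (bernoulliInputMI_nonneg hW0 hβ0.le (hβγ.trans hγ1)) hβ0.le
  have hrate : γ / k ≤ β / t := one_sub_pow_div_le_one_sub_pow_div (by linarith) ht htk
  have hk : (0 : ℝ) < k := by exact_mod_cast ht.trans htk
  calc G γ / k = G γ / γ * (γ / k) := by field_simp
    _ ≤ G β / β * (γ / k) := mul_le_mul_of_nonneg_right hG (div_nonneg hγ0.le hk.le)
    _ ≤ G β / β * (β / t) := mul_le_mul_of_nonneg_left hrate hGβ
    _ = G β / t := by field_simp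
end
end

section
/- Friendliness of the binary OR multiple access channel: for any k ≥ 2, p ∈ (0,1), and 1 ≤ s < k, I(X_1,…,X_s ; Y | X_{s+1},…,X_k) = Pr{X_{s+1} = ⋯ = X_k = 0} · I_{μ₀}(X_1,…,X_s ; Y), where I_{μ₀} denotes mutual information computed under the law conditioned on the event {X_{s+1} = ⋯ = X_k = 0}. Consequently, I(X_1,…,X_s ; Y | X_{s+1},…,X_k) ≤ I_{μ₀}(X_1,…,X_s ; Y). -/
open Finset
open scoped Classical

noncomputable section

/-- Conditional mutual information `I(A;B|C)` (natural logarithm) of a joint pmf on a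
product of three finite sets, conditioning on the third coordinate. -/
def CMI {A B C : Type} [Fintype A] [Fintype B] [Fintype C] (μ : A → B → C → ℝ) : ℝ :=
  ∑ a : A, ∑ b : B, ∑ c : C,
    μ a b c * Real.log ((μ a b c * (∑ a' : A, ∑ b' : B, μ a' b' c)) /
      ((∑ b' : B, μ a b' c) * (∑ a' : A, μ a' b c)))

/-- Joint pmf of `((X_1,…,X_s), Y, (X_{s+1},…,X_{s+r}))` for the `(s+r)`-user binary OR
multiple access channel at parameter `p` with channel `W`. -/
def macAYC {Y : Type} [Fintype Y] (W : Y → Bool → ℝ) (p : ℝ) (s r : ℕ)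
    (a : Fin s → Bool) (y : Y) (c : Fin r → Bool) : ℝ :=
  (∏ i, bern p (a i)) * (∏ j, bern p (c j)) * W y (orB a || orB c)

/-- `Pr{X_{s+1} = ⋯ = X_k = 0}` under the above joint law. -/
def probZero {Y : Type} [Fintype Y] (W : Y → Bool → ℝ) (p : ℝ) (s r : ℕ) : ℝ :=
  ∑ a : Fin s → Bool, ∑ y : Y, macAYC W p s r a y (fun _ => false)

/-- The joint pmf of `((X_1,…,X_s), Y)` under the law conditioned on the event
`{X_{s+1} = ⋯ = X_k = 0}`. -/
def condZeroJoint {Y : Type} [Fintype Y] (W : Y → Bool → ℝ) (p : ℝ) (s r : ℕ)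
    (a : Fin s → Bool) (y : Y) : ℝ :=
  macAYC W p s r a y (fun _ => false) / probZero W p s r

/-!
Once one of `X_{s+1},…,X_k` is `1`, the OR is `1` whatever `X_1,…,X_s` are, so on that slice of
the conditioning variable the joint law of `((X_1,…,X_s), Y)` is a product and contributes nothing
to the conditional mutual information. Only the slice `X_{s+1} = ⋯ = X_k = 0` survives, and its
contribution is its mass times the mutual information of the normalized slice. The inequality
follows since that mass is at most `1` and mutual information is nonnegative (Gibbs).
-/

open Real

section MutualInformation

variable {A B : Type} [Fintype A] [Fintype B]

def unnormalizedMI (μ : A → B → ℝ) : ℝ :=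
  ∑ a, ∑ b, μ a b * log (μ a b * (∑ a', ∑ b', μ a' b') / ((∑ b', μ a b') * (∑ a', μ a' b)))

lemma CMI_eq_sum_unnormalizedMI {C : Type} [Fintype C] (μ : A → B → C → ℝ) :
    CMI μ = ∑ c, unnormalizedMI (fun a b => μ a b c) := by
  unfold CMI unnormalizedMI
  simp_rw [sum_comm (s := (univ : Finset B)) (t := (univ : Finset C))]
  exact sum_comm

lemma unnormalizedMI_mul_eq_zero (u : A → ℝ) (v : B → ℝ) :
    unnormalizedMI (fun a b => u a * v b) = 0 := by
  refine sum_eq_zero fun a _ => sum_eq_zero fun b _ => ?_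
  simp only [← mul_sum, ← sum_mul]
  -- every logarithm is `log (x / x)`, which is `0` also when `x = 0`
  set x := u a * v b * ((∑ i, u i) * ∑ i, v i)
  rw [show (u a * ∑ i, v i) * ((∑ i, u i) * v b) = x by ring]
  rcases eq_or_ne x 0 with h | h <;> simp [h]

lemma unnormalizedMI_eq_mul_MI (μ : A → B → ℝ) :
    unnormalizedMI μ = (∑ a, ∑ b, μ a b) * MI (fun a b => μ a b / ∑ a, ∑ b, μ a b) := by
  unfold unnormalizedMI MI
  set T := ∑ a, ∑ b, μ a b
  rcases eq_or_ne T 0 with hT | hT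
  · simp [hT]
  rw [mul_sum]; refine sum_congr rfl fun a _ => ?_
  rw [mul_sum]; refine sum_congr rfl fun b _ => ?_
  simp only [← sum_div]
  rw [show μ a b / T / ((∑ b', μ a b') / T * ((∑ a', μ a' b) / T))
      = μ a b * T / ((∑ b', μ a b') * (∑ a', μ a' b)) by
    rw [div_mul_div_comm, div_div_div_eq, mul_comm T (_ * _), ← mul_assoc,
      mul_div_mul_right _ _ hT]]
  field_simp

lemma sub_le_mul_log_div {x y : ℝ} (hx : 0 ≤ x) (hy : 0 ≤ y) (hxy : y = 0 → x = 0) :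
    x - y ≤ x * log (x / y) := by
  rcases hx.eq_or_lt with rfl | hx
  · simpa using hy
  have hy : 0 < y := hy.lt_of_ne fun h => hx.ne' (hxy h.symm)
  have hlog := log_le_sub_one_of_pos (div_pos hy hx)
  have hneg : log (y / x) = -log (x / y) := by rw [← log_inv, inv_div]
  have hscale : x * (y / x - 1) = y - x := by field_simp
  nlinarith [mul_le_mul_of_nonneg_left hlog hx.le]

lemma MI_nonneg {μ : A → B → ℝ} (hμ : ∀ a b, 0 ≤ μ a b) (hμ1 : ∑ a, ∑ b, μ a b = 1) :
    0 ≤ MI μ := by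
  set R := fun a => ∑ b, μ a b
  set C := fun b => ∑ a, μ a b
  have hR : ∀ a b, μ a b ≤ R a := fun a b => single_le_sum (fun b _ => hμ a b) (mem_univ b)
  have hC : ∀ a b, μ a b ≤ C b := fun a b => single_le_sum (fun a _ => hμ a b) (mem_univ a)
  have hRC : ∑ a, ∑ b, R a * C b = 1 := by
    rw [← sum_mul_sum, show ∑ b, C b = 1 by rw [sum_comm]; exact hμ1]
    simpa [R] using hμ1
  calc 0 = ∑ a, ∑ b, (μ a b - R a * C b) := by
        simp only [sum_sub_distrib, hRC]
        exact (sub_eq_zero.2 hμ1).symm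
    _ ≤ MI μ := by
      refine sum_le_sum fun a _ => sum_le_sum fun b _ => sub_le_mul_log_div (hμ a b)
        (mul_nonneg ((hμ a b).trans (hR a b)) ((hμ a b).trans (hC a b))) fun h => ?_
      rcases mul_eq_zero.1 h with h | h
      · exact le_antisymm (h ▸ hR a b) (hμ a b)
      · exact le_antisymm (h ▸ hC a b) (hμ a b)

lemma MI_div_sum_nonneg {μ : A → B → ℝ} (hμ : ∀ a b, 0 ≤ μ a b) :
    0 ≤ MI (fun a b => μ a b / ∑ a, ∑ b, μ a b) := by
  set T := ∑ a, ∑ b, μ a b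
  rcases eq_or_ne T 0 with hT | hT
  · simp [MI, hT]
  refine MI_nonneg (fun a b => div_nonneg (hμ a b)
    (sum_nonneg fun a _ => sum_nonneg fun b _ => hμ a b)) ?_
  simp only [← sum_div]
  exact div_self hT

end MutualInformation

section BinaryOrMAC

lemma bern_nonneg {p : ℝ} (hp : p ∈ Set.Icc (0 : ℝ) 1) (b : Bool) : 0 ≤ bern p b := by
  cases b <;> simp [bern] <;> linarith [hp.1, hp.2]

lemma sum_prod_bern (p : ℝ) (n : ℕ) : ∑ a : Fin n → Bool, ∏ i, bern p (a i) = 1 := by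
  rw [← Fintype.sum_pow]
  simp [bern]

lemma orB_eq_true_of_ne {t : ℕ} {c : Fin t → Bool} (hc : c ≠ fun _ => false) :
    orB c = true := by
  by_contra h
  simp only [orB, decide_eq_true_eq, not_exists, Bool.not_eq_true] at h
  exact hc (funext h)

variable {Y : Type} [Fintype Y]

lemma CMI_macAYC (W : Y → Bool → ℝ) (p : ℝ) (s r : ℕ) :
    CMI (macAYC W p s r) = probZero W p s r * MI (condZeroJoint W p s r) := by
  rw [CMI_eq_sum_unnormalizedMI, sum_eq_single (fun _ => false)]
  · exact unnormalizedMI_eq_mul_MI _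
  · intro c _ hc
    have hslice : (fun a y => macAYC W p s r a y c)
        = fun a y => ((∏ i, bern p (a i)) * ∏ j, bern p (c j)) * W y true := by
      funext a y
      simp [macAYC, orB_eq_true_of_ne hc]
    rw [hslice]
    exact unnormalizedMI_mul_eq_zero _ _
  · simp

lemma probZero_eq {W : Y → Bool → ℝ} (hW1 : ∀ z, ∑ y, W y z = 1) (p : ℝ) (s r : ℕ) :
    probZero W p s r = (1 - p) ^ r := by
  simp [probZero, macAYC, orB, ← mul_sum, hW1, ← sum_mul, sum_prod_bern]
  simp [bern]

lemma macAYC_nonneg {W : Y → Bool → ℝ} (hW0 : ∀ y z, 0 ≤ W y z) {p : ℝ}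
    (hp : p ∈ Set.Icc (0 : ℝ) 1) {s r : ℕ} (a : Fin s → Bool) (y : Y) (c : Fin r → Bool) :
    0 ≤ macAYC W p s r a y c :=
  mul_nonneg (mul_nonneg (prod_nonneg fun _ _ => bern_nonneg hp _)
    (prod_nonneg fun _ _ => bern_nonneg hp _)) (hW0 _ _)

end BinaryOrMAC

theorem statement10_general (Y : Type) [Fintype Y] (W : Y → Bool → ℝ)
    (hW0 : ∀ y z, 0 ≤ W y z) (hW1 : ∀ z, ∑ y : Y, W y z = 1)
    (p : ℝ) (hp : p ∈ Set.Ioo (0 : ℝ) 1)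
    (s r : ℕ) :
    CMI (macAYC W p s r) = probZero W p s r * MI (condZeroJoint W p s r) ∧
    CMI (macAYC W p s r) ≤ MI (condZeroJoint W p s r) := by
  have hCMI := CMI_macAYC W p s r
  have hMI : 0 ≤ MI (condZeroJoint W p s r) :=
    MI_div_sum_nonneg fun a y => macAYC_nonneg hW0 (Set.Ioo_subset_Icc_self hp) a y _
  have hmass : probZero W p s r ≤ 1 := by
    rw [probZero_eq hW1]
    exact pow_le_one₀ (by linarith [hp.2]) (by linarith [hp.1])
  exact ⟨hCMI, hCMI ▸ mul_le_of_le_one_left hMI hmass⟩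

/-- friendliness of the binary OR multiple access channel.  For
`k = s + r ≥ 2` users (`1 ≤ s < k`) and `p ∈ (0,1)`,
`I(X_1,…,X_s ; Y | X_{s+1},…,X_k) = Pr{X_{s+1}=⋯=X_k=0} · I_{μ₀}(X_1,…,X_s ; Y)`,
where `I_{μ₀}` is the mutual information under the law conditioned on
`{X_{s+1}=⋯=X_k=0}`; consequently
`I(X_1,…,X_s ; Y | X_{s+1},…,X_k) ≤ I_{μ₀}(X_1,…,X_s ; Y)`. -/
theorem statement10 (Y : Type) [Fintype Y] (W : Y → Bool → ℝ)
    (hW0 : ∀ y z, 0 ≤ W y z) (hW1 : ∀ z, ∑ y : Y, W y z = 1)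
    (p : ℝ) (hp : p ∈ Set.Ioo (0 : ℝ) 1)
    (s r : ℕ) (hs : 1 ≤ s) (hr : 1 ≤ r) :
    CMI (macAYC W p s r) = probZero W p s r * MI (condZeroJoint W p s r) ∧
    CMI (macAYC W p s r) ≤ MI (condZeroJoint W p s r) :=
  statement10_general Y W hW0 hW1 p hp s r
end
end
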